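/- arXiv:math/0510048 — 4 statements merged into one kernel-verified Lean document; each statement's English description precedes it below -/
import Mathlib

section
/- There exists a constant C > 0 such that for every integer k ≥ 2 and every integer j with 1 ≤ j ≤ k−1, setting d = 2k+1, one has exp(−(d/π)·Λ(πj/d) − C·log d) ≤ ∏_{i=1}^{j} 2·sin(iπ/d) ≤ exp(−(d/π)·Λ(πj/d) + C·log d). (Note that ∏_{i=1}^{j} 2 sin(iπ/d) = (2 sin(π/d))^j · [j]_d!, i.e. this bounds the evaluated quantum factorial.) -/
/-!
Put `δ = π / d`. Then `δ log ∏_{i ≤ j} 2 sin(iδ)` is a right-endpoint Riemann sum, with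
step `δ`, of `log (2 sin s)` over `[0, jδ]`, whose integral is `-Λ(jδ)`. As `log (2 sin)` increases
on `(0, π/2]` and `(j + 1)δ ≤ π/2`, the logarithm lies between `1/δ` times the integrals over `[0, jδ]`
and over `[δ, (j + 1)δ]`. These integrals differ by the integral over `[jδ, (j + 1)δ]`, at most
`δ log 2`, minus the one over `[0, δ]`, which is at least `δ log δ - δ` because `2 sin s ≥ s` there.
So the error is at most `log (2/δ) + 1 = O(log d)`.
-/

open Real Filter Finset

/-- The Lobachevsky function Λ(x) = −∫₀ˣ log|2 sin s| ds. -/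
noncomputable def Lob (x : ℝ) : ℝ := -∫ s in (0:ℝ)..x, Real.log |2 * Real.sin s|

open MeasureTheory Set intervalIntegral

section MonotoneRiemannSum

variable {f : ℝ → ℝ}

theorem integral_le_mul_of_monotoneOn_Ioc {a b : ℝ} (hab : a ≤ b) (hf : MonotoneOn f (Ioc a b))
    (hint : IntervalIntegrable f volume a b) : ∫ x in a..b, f x ≤ (b - a) * f b := by
  calc ∫ x in a..b, f x ≤ ∫ _ in a..b, f b :=
        integral_mono_on_of_le_Ioo hab hint intervalIntegrable_const
          fun x hx ↦ hf ⟨hx.1, hx.2.le⟩ ⟨hx.1.trans hx.2, le_rfl⟩ hx.2.le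
    _ = (b - a) * f b := by simp

theorem mul_le_integral_of_monotoneOn_Ico {a b : ℝ} (hab : a ≤ b) (hf : MonotoneOn f (Ico a b))
    (hint : IntervalIntegrable f volume a b) : (b - a) * f a ≤ ∫ x in a..b, f x := by
  calc (b - a) * f a = ∫ _ in a..b, f a := by simp
    _ ≤ ∫ x in a..b, f x :=
        integral_mono_on_of_le_Ioo hab intervalIntegrable_const hint
          fun x hx ↦ hf ⟨le_rfl, hx.1.trans hx.2⟩ ⟨hx.1.le, hx.2⟩ hx.1.le

variable {δ : ℝ} (hδ : 0 ≤ δ)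
include hδ

theorem integral_le_mul_sum_of_monotoneOn_Ioc (n : ℕ) (hf : MonotoneOn f (Ioc 0 (n * δ)))
    (hint : IntervalIntegrable f volume 0 (n * δ)) :
    ∫ x in 0..n * δ, f x ≤ δ * ∑ i ∈ Icc 1 n, f (i * δ) := by
  induction n with
  | zero => simp
  | succ n ih =>
    have hle : (n : ℝ) * δ ≤ (n + 1 : ℕ) * δ := by gcongr; omega
    have hsub : Ioc (n * δ) ((n + 1 : ℕ) * δ) ⊆ Ioc 0 ((n + 1 : ℕ) * δ) :=
      Ioc_subset_Ioc_left (by positivity)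
    have hmem : (n : ℝ) * δ ∈ uIcc 0 ((n + 1 : ℕ) * δ) := mem_uIcc_of_le (by positivity) hle
    have hint₀ := hint.mono_set (uIcc_subset_uIcc_left hmem)
    have hint₁ := hint.mono_set (uIcc_subset_uIcc_right hmem)
    rw [← integral_add_adjacent_intervals hint₀ hint₁, sum_Icc_succ_top (by omega), mul_add]
    gcongr
    · exact ih (hf.mono (Ioc_subset_Ioc_right hle)) hint₀
    · simpa [add_mul] using integral_le_mul_of_monotoneOn_Ioc hle (hf.mono hsub) hint₁

theorem mul_sum_le_integral_of_monotoneOn_Ico (n : ℕ) (hf : MonotoneOn f (Ico δ ((n + 1) * δ)))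
    (hint : IntervalIntegrable f volume δ ((n + 1) * δ)) :
    δ * ∑ i ∈ Icc 1 n, f (i * δ) ≤ ∫ x in δ..(n + 1) * δ, f x := by
  induction n with
  | zero => simp
  | succ n ih =>
    push_cast at hf hint ⊢
    have hle : ((n : ℝ) + 1) * δ ≤ (n + 1 + 1) * δ := by gcongr; linarith
    have hδle : δ ≤ ((n : ℝ) + 1) * δ :=
      le_mul_of_one_le_left hδ (by linarith [n.cast_nonneg (α := ℝ)])
    have hmem : ((n : ℝ) + 1) * δ ∈ uIcc δ ((n + 1 + 1) * δ) := mem_uIcc_of_le hδle hle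
    have hint₀ := hint.mono_set (uIcc_subset_uIcc_left hmem)
    have hint₁ := hint.mono_set (uIcc_subset_uIcc_right hmem)
    rw [← integral_add_adjacent_intervals hint₀ hint₁, sum_Icc_succ_top (by omega), mul_add]
    gcongr
    · exact ih (hf.mono (Ico_subset_Ico_right hle)) hint₀
    · have hsub : Ico ((n + 1) * δ) ((n + 1 + 1) * δ) ⊆ Ico δ ((n + 1 + 1) * δ) :=
        Set.Ico_subset_Ico_left hδle
      simpa [add_mul] using mul_le_integral_of_monotoneOn_Ico hle (hf.mono hsub) hint₁

end MonotoneRiemannSum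

noncomputable def logAbsTwoSin (s : ℝ) : ℝ := log |2 * sin s|

theorem intervalIntegrable_logAbsTwoSin (a b : ℝ) :
    IntervalIntegrable logAbsTwoSin volume a b := by
  have : logAbsTwoSin = log ∘ fun s ↦ 2 * sin s := funext fun s ↦ log_abs _
  rw [this]
  exact (analyticOnNhd_const.mul analyticOnNhd_sin).meromorphicOn.intervalIntegrable_log

theorem logAbsTwoSin_le_log_two (s : ℝ) : logAbsTwoSin s ≤ log 2 := by
  rcases eq_or_ne (sin s) 0 with hs | hs
  · simp [logAbsTwoSin, hs, log_nonneg one_le_two]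
  · refine log_le_log (by positivity) ?_
    rw [abs_mul, abs_two]
    linarith [abs_sin_le_one s]

theorem logAbsTwoSin_eq {s : ℝ} (h0 : 0 < s) (hπ : s < π) :
    logAbsTwoSin s = log (2 * sin s) := by
  rw [logAbsTwoSin, abs_of_pos (mul_pos two_pos (sin_pos_of_pos_of_lt_pi h0 hπ))]

theorem monotoneOn_logAbsTwoSin : MonotoneOn logAbsTwoSin (Ioc 0 (π / 2)) := by
  intro s hs t ht hst
  have hsπ : s < π := by linarith [hs.2, pi_pos]
  have htπ : t < π := by linarith [ht.2, pi_pos]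
  rw [logAbsTwoSin_eq hs.1 hsπ, logAbsTwoSin_eq (hs.1.trans_le hst) htπ]
  gcongr
  · exact mul_pos two_pos (sin_pos_of_pos_of_lt_pi hs.1 hsπ)
  · exact sin_le_sin_of_le_of_le_pi_div_two (by linarith [hs.1, pi_pos]) ht.2 hst

theorem log_le_logAbsTwoSin {s : ℝ} (h0 : 0 < s) (hs : s ≤ π / 2) : log s ≤ logAbsTwoSin s := by
  rw [logAbsTwoSin_eq h0 (by linarith [pi_pos])]
  refine log_le_log h0 ?_
  have := mul_le_sin h0.le hs
  have : 2 / π * s * π = 2 * s := by field_simp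
  nlinarith [pi_le_four, pi_pos]

theorem mul_log_sub_le_integral_logAbsTwoSin {δ : ℝ} (hδ : 0 ≤ δ) (hδπ : δ ≤ π / 2) :
    δ * log δ - δ ≤ ∫ s in 0..δ, logAbsTwoSin s := by
  calc δ * log δ - δ = ∫ s in 0..δ, log s := by simp
    _ ≤ ∫ s in 0..δ, logAbsTwoSin s :=
      integral_mono_on_of_le_Ioo hδ intervalIntegrable_log' (intervalIntegrable_logAbsTwoSin 0 δ)
        fun s hs ↦ log_le_logAbsTwoSin hs.1 (hs.2.le.trans hδπ)

theorem neg_lob_eq_integral (x : ℝ) : -Lob x = ∫ s in 0..x, logAbsTwoSin s := neg_neg _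

theorem exp_logAbsTwoSin {s : ℝ} (h0 : 0 < s) (hπ : s < π) :
    exp (logAbsTwoSin s) = 2 * sin s := by
  rw [logAbsTwoSin_eq h0 hπ, exp_log (mul_pos two_pos (sin_pos_of_pos_of_lt_pi h0 hπ))]

section RiemannSum

variable {δ : ℝ} (hδ : 0 < δ) {n : ℕ} (hn : (n + 1) * δ ≤ π / 2)
include hδ hn

theorem neg_lob_div_le_sum_logAbsTwoSin :
    -Lob (n * δ) / δ ≤ ∑ i ∈ Icc 1 n, logAbsTwoSin (i * δ) := by
  have hnδ : n * δ ≤ π / 2 := by linarith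
  rw [div_le_iff₀' hδ, neg_lob_eq_integral]
  refine integral_le_mul_sum_of_monotoneOn_Ioc hδ.le n ?_ (intervalIntegrable_logAbsTwoSin _ _)
  exact monotoneOn_logAbsTwoSin.mono (Ioc_subset_Ioc_right hnδ)

theorem sum_logAbsTwoSin_le :
    ∑ i ∈ Icc 1 n, logAbsTwoSin (i * δ) ≤ -Lob (n * δ) / δ + log (2 / δ) + 1 := by
  have hint := intervalIntegrable_logAbsTwoSin
  have hsum : δ * ∑ i ∈ Icc 1 n, logAbsTwoSin (i * δ) ≤ ∫ s in δ..(n + 1) * δ, logAbsTwoSin s :=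
    mul_sum_le_integral_of_monotoneOn_Ico hδ.le n
      (monotoneOn_logAbsTwoSin.mono fun _ hs ↦ ⟨hδ.trans_le hs.1, hs.2.le.trans hn⟩) (hint _ _)
  have hlast : ∫ s in n * δ..(n + 1) * δ, logAbsTwoSin s ≤ δ * log 2 := by
    calc ∫ s in n * δ..(n + 1) * δ, logAbsTwoSin s ≤ ∫ _ in n * δ..(n + 1) * δ, log 2 :=
          integral_mono_on (by linarith) (hint _ _) intervalIntegrable_const
            fun s _ ↦ logAbsTwoSin_le_log_two s
      _ = δ * log 2 := by rw [intervalIntegral.integral_const, smul_eq_mul]; ring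
  have hfirst := mul_log_sub_le_integral_logAbsTwoSin hδ.le (by nlinarith [n.cast_nonneg (α := ℝ)])
  have hsplit₁ := integral_add_adjacent_intervals (hint 0 δ) (hint δ ((n + 1) * δ))
  have hsplit₂ := integral_add_adjacent_intervals (hint 0 (n * δ)) (hint (n * δ) ((n + 1) * δ))
  refine le_of_mul_le_mul_left ?_ hδ
  rw [mul_add, mul_add, mul_div_cancel₀ _ hδ.ne', neg_lob_eq_integral, log_div two_ne_zero hδ.ne']
  linarith

end RiemannSum

theorem prod_two_sin_eq_exp_sum {δ : ℝ} (hδ : 0 < δ) {n : ℕ} (hn : n * δ < π) :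
    ∏ i ∈ Icc 1 n, 2 * sin (i * δ) = exp (∑ i ∈ Icc 1 n, logAbsTwoSin (i * δ)) := by
  rw [exp_sum]
  refine prod_congr rfl fun i hi ↦ (exp_logAbsTwoSin ?_ ?_).symm
  · have : (1 : ℝ) ≤ i := by exact_mod_cast (mem_Icc.1 hi).1
    positivity
  · have : (i : ℝ) ≤ n := by exact_mod_cast (mem_Icc.1 hi).2
    nlinarith

theorem log_two_mul_div_pi_add_one_le {d : ℝ} (hd : 3 ≤ d) : log (2 * d / π) + 1 ≤ 2 * log d := by
  have hlog : log (2 * d / π) ≤ log d := by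
    refine log_le_log (by positivity) ?_
    rw [div_le_iff₀ pi_pos]
    nlinarith [pi_gt_three]
  have hone : 1 ≤ log d := by
    rw [le_log_iff_exp_le (by positivity)]
    linarith [exp_one_lt_d9]
  linarith

/-- There is a constant `C > 0` such that for every `k ≥ 2` and `1 ≤ j ≤ k − 1`, with
`d = 2k+1`, the product `∏_{i=1}^{j} 2 sin(iπ/d)` (the evaluated quantum factorial
multiplied by `(2 sin(π/d))^j`) is bounded between
`exp(−(d/π)Λ(πj/d) ∓ C log d)`. -/
theorem stmt_0 :
    ∃ C : ℝ, 0 < C ∧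
      ∀ k j : ℕ, 2 ≤ k → 1 ≤ j → j ≤ k - 1 →
        Real.exp (-((2 * k + 1 : ℝ) / Real.pi) * Lob (Real.pi * j / (2 * k + 1))
            - C * Real.log (2 * k + 1))
          ≤ ∏ i ∈ Finset.Icc 1 j, 2 * Real.sin (i * Real.pi / (2 * k + 1)) ∧
        ∏ i ∈ Finset.Icc 1 j, 2 * Real.sin (i * Real.pi / (2 * k + 1))
          ≤ Real.exp (-((2 * k + 1 : ℝ) / Real.pi) * Lob (Real.pi * j / (2 * k + 1))
            + C * Real.log (2 * k + 1)) := by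
  refine ⟨2, two_pos, fun k j hk _ hjk ↦ ?_⟩
  set d : ℝ := 2 * k + 1
  have hd : 5 ≤ d := by
    have : (2 : ℝ) ≤ k := by exact_mod_cast hk
    linarith
  set δ := π / d with hδ_def
  have hδ : 0 < δ := by positivity
  have hjδ : (j + 1) * δ ≤ π / 2 := by
    have : (j : ℝ) + 1 ≤ k := by exact_mod_cast (by omega : j + 1 ≤ k)
    rw [hδ_def, ← mul_div_assoc, div_le_div_iff₀ (by positivity) two_pos]
    nlinarith [pi_pos]
  have hprod : ∏ i ∈ Icc 1 j, 2 * sin (i * π / d) = exp (∑ i ∈ Icc 1 j, logAbsTwoSin (i * δ)) := by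
    simp_rw [mul_div_assoc]
    exact prod_two_sin_eq_exp_sum hδ (by nlinarith [pi_pos])
  have hLob : -(d / π) * Lob (π * j / d) = -Lob (j * δ) / δ := by
    rw [hδ_def, mul_comm π, mul_div_assoc]
    field_simp
  have hlog : log (2 / δ) + 1 ≤ 2 * log d := by
    rw [hδ_def, div_div_eq_mul_div]
    exact log_two_mul_div_pi_add_one_le (by linarith)
  have hlower := neg_lob_div_le_sum_logAbsTwoSin hδ hjδ
  have hupper := sum_logAbsTwoSin_le hδ hjδ
  rw [hprod, hLob, exp_le_exp, exp_le_exp]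
  constructor <;> linarith
end

section
/- There exists a constant C > 0 such that for every integer k ≥ 2 and every integer j with 1 ≤ j ≤ k−1, setting d = 2k+1, the evaluated quantum binomial coefficient satisfies exp(−(d/π)·(Λ(πk/d) − Λ(πj/d) − Λ(π(k−j)/d)) − 3C·log d) ≤ [k choose j]_d ≤ exp(−(d/π)·(Λ(πk/d) − Λ(πj/d) − Λ(π(k−j)/d)) + 3C·log d). -/
open Real Filter Finset

/-- Evaluated quantum integer `[n]_d = sin(nπ/d)/sin(π/d)`. -/
noncomputable def qInt (d n : ℕ) : ℝ := Real.sin (n * Real.pi / d) / Real.sin (Real.pi / d)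

/-- Evaluated quantum factorial `[n]_d! = ∏_{i=1}^n [i]_d`. -/
noncomputable def qFact (d n : ℕ) : ℝ := ∏ i ∈ Finset.Icc 1 n, qInt d i

/-- Evaluated quantum binomial `[k choose j]_d = [k]_d! / ([j]_d! [k−j]_d!)`. -/
noncomputable def qBinom (d k j : ℕ) : ℝ := qFact d k / (qFact d j * qFact d (k - j))

/-! With `f s = log (2 sin s)` one has `log [n]_d! = ∑_{i=1}^n f(iπ/d) - n f(π/d)` and
`Λ(nπ/d) = -∫₀^{nπ/d} f`. For `2n ≤ d` the nodes `iπ/d` lie in `(0, π/2]`, where `f` is increasing,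
so the Riemann sum `(π/d) ∑ f(iπ/d)` exceeds the integral by a nonnegative amount that is at most
`(π/d) f(nπ/d) - ∫₀^{π/d} f`; Jordan's inequality `sin s ≥ 2s/π` bounds this by `(π/d) · 2 log d`.
The terms `n f(π/d)` cancel in the binomial coefficient (as `k = j + (k - j)`), leaving an error
in `[-4 log d, 2 log d]`, so `C = 2` works. -/

open intervalIntegral MeasureTheory

theorem MonotoneOn.comp_mul_right {f : ℝ → ℝ} {h a b : ℝ} (hh : 0 ≤ h)
    (hf : MonotoneOn f (Set.Icc (a * h) (b * h))) :
    MonotoneOn (fun t => f (t * h)) (Set.Icc a b) := fun _ hx _ hy hxy =>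
  hf ⟨mul_le_mul_of_nonneg_right hx.1 hh, mul_le_mul_of_nonneg_right hx.2 hh⟩
    ⟨mul_le_mul_of_nonneg_right hy.1 hh, mul_le_mul_of_nonneg_right hy.2 hh⟩
    (mul_le_mul_of_nonneg_right hxy hh)

theorem MonotoneOn.mul_sum_Ico_le_integral {f : ℝ → ℝ} {h : ℝ} (hh : 0 < h) {a b : ℕ}
    (hab : a ≤ b) (hf : MonotoneOn f (Set.Icc (a * h) (b * h))) :
    h * ∑ i ∈ Finset.Ico a b, f (i * h) ≤ ∫ x in a * h..b * h, f x := by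
  have := (hf.comp_mul_right hh.le).sum_le_integral_Ico hab
  rw [integral_comp_mul_right _ hh.ne', smul_eq_mul] at this
  rwa [← le_inv_mul_iff₀ hh]

theorem MonotoneOn.integral_le_mul_sum_Ico {f : ℝ → ℝ} {h : ℝ} (hh : 0 < h) {a b : ℕ}
    (hab : a ≤ b) (hf : MonotoneOn f (Set.Icc (a * h) (b * h))) :
    ∫ x in a * h..b * h, f x ≤ h * ∑ i ∈ Finset.Ico a b, f ((i + 1 : ℕ) * h) := by
  have := (hf.comp_mul_right hh.le).integral_le_sum_Ico hab
  rw [integral_comp_mul_right _ hh.ne', smul_eq_mul] at this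
  rwa [← inv_mul_le_iff₀ hh]

noncomputable def logTwoSin (s : ℝ) : ℝ := log (2 * sin s)

lemma intervalIntegrable_logTwoSin (a b : ℝ) : IntervalIntegrable logTwoSin volume a b :=
  (analyticOnNhd_const.mul analyticOnNhd_sin).meromorphicOn.intervalIntegrable_log

lemma Lob_eq_neg_integral_logTwoSin (x : ℝ) : Lob x = -∫ s in (0:ℝ)..x, logTwoSin s := by
  simp only [Lob, logTwoSin, Real.log_abs]

lemma logTwoSin_le_log_two (s : ℝ) : logTwoSin s ≤ log 2 := by
  rw [logTwoSin, ← log_abs]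
  rcases eq_or_ne (2 * sin s) 0 with h | h
  · rw [h, abs_zero, log_zero]
    exact log_nonneg one_le_two
  · apply log_le_log (abs_pos.2 h)
    rw [abs_mul, abs_two]
    linarith [abs_sin_le_one s]

lemma monotoneOn_logTwoSin : MonotoneOn logTwoSin (Set.Ioc 0 (π / 2)) := by
  intro x hx y hy hxy
  have hx_pos : 0 < sin x := sin_pos_of_pos_of_lt_pi hx.1 (by linarith [hx.2, pi_pos])
  apply log_le_log (by positivity)
  gcongr
  exact sin_le_sin_of_le_of_le_pi_div_two (by linarith [hx.1, pi_pos]) hy.2 hxy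

lemma integral_logTwoSin_le {c : ℝ} (hc : 0 < c) (hc' : c ≤ π / 2) :
    ∫ s in (0:ℝ)..c, logTwoSin s ≤ c * logTwoSin c := by
  have := integral_mono_on_of_le_Ioo hc.le (intervalIntegrable_logTwoSin 0 c)
    intervalIntegrable_const fun s hs =>
      monotoneOn_logTwoSin ⟨hs.1, by linarith [hs.2]⟩ ⟨hc, hc'⟩ hs.2.le
  simpa using this

lemma le_integral_logTwoSin {c : ℝ} (hc : 0 < c) (hc' : c ≤ π / 2) :
    c * (log (4 / π) + log c - 1) ≤ ∫ s in (0:ℝ)..c, logTwoSin s := by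
  calc c * (log (4 / π) + log c - 1) = ∫ s in (0:ℝ)..c, (log (4 / π) + log s) := by
        rw [integral_add intervalIntegrable_const intervalIntegrable_log', integral_log]
        simp only [intervalIntegral.integral_const, sub_zero, smul_eq_mul, log_zero, mul_zero,
          add_zero]
        ring
    _ ≤ _ := by
      refine integral_mono_on_of_le_Ioo hc.le (intervalIntegrable_const.add intervalIntegrable_log')
        (intervalIntegrable_logTwoSin 0 c) fun s hs => ?_
      have hsin := mul_le_sin hs.1.le (by linarith [hs.2])
      rw [← log_mul (by positivity) hs.1.ne', logTwoSin]
      apply log_le_log (by have := hs.1; positivity)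
      linarith [show 4 / π * s = 2 * (2 / π * s) by ring]

lemma integral_logTwoSin_le_mul_sum {c : ℝ} (hc : 0 < c) {n : ℕ} (hn : 1 ≤ n)
    (hnc : n * c ≤ π / 2) :
    ∫ s in (0:ℝ)..n * c, logTwoSin s ≤ c * ∑ i ∈ Finset.Icc 1 n, logTwoSin (i * c) ∧
      c * ∑ i ∈ Finset.Icc 1 n, logTwoSin (i * c) ≤
        (∫ s in (0:ℝ)..n * c, logTwoSin s) + c * logTwoSin (n * c) -
          ∫ s in (0:ℝ)..c, logTwoSin s := by
  have hc_le : c ≤ π / 2 := by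
    have hn' : (1 : ℝ) ≤ n := by exact_mod_cast hn
    nlinarith
  have hmono : MonotoneOn logTwoSin (Set.Icc ((1 : ℕ) * c) (n * c)) :=
    monotoneOn_logTwoSin.mono fun s hs =>
      ⟨(by simpa using hc : (0 : ℝ) < (1 : ℕ) * c).trans_le hs.1, hs.2.trans hnc⟩
  have hlower := hmono.mul_sum_Ico_le_integral hc hn
  have hupper := hmono.integral_le_mul_sum_Ico hc hn
  simp only [Nat.cast_one, one_mul] at hlower hupper
  have hsplit := integral_add_adjacent_intervals (intervalIntegrable_logTwoSin 0 c)
    (intervalIntegrable_logTwoSin c (n * c))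
  have hsum_top : ∑ i ∈ Finset.Icc 1 n, logTwoSin (i * c) =
      ∑ i ∈ Finset.Ico 1 n, logTwoSin (i * c) + logTwoSin (n * c) := by
    rw [← Finset.sum_Ico_add_eq_sum_Icc hn]
  have hsum_bot : ∑ i ∈ Finset.Icc 1 n, logTwoSin (i * c) =
      logTwoSin c + ∑ i ∈ Finset.Ico 1 n, logTwoSin ((i + 1 : ℕ) * c) := by
    rw [← Finset.Ico_add_one_right_eq_Icc, Finset.sum_eq_sum_Ico_succ_bot (by omega),
      Finset.sum_Ico_add' (fun i : ℕ => logTwoSin (i * c))]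
    simp
  have hfirst := integral_logTwoSin_le hc hc_le
  constructor
  · rw [hsum_bot, mul_add]
    linarith
  · rw [hsum_top, mul_add]
    linarith

lemma sin_natCast_mul_pi_div_pos {d i : ℕ} (hi : 0 < i) (hid : i < d) : 0 < sin (i * π / d) := by
  have hi' : (0 : ℝ) < i := by exact_mod_cast hi
  have hid' : (i : ℝ) < d := by exact_mod_cast hid
  have hd : (0 : ℝ) < d := hi'.trans hid'
  apply sin_pos_of_pos_of_lt_pi (by positivity)
  rw [div_lt_iff₀ hd]
  nlinarith [pi_pos]

lemma qInt_pos {d i : ℕ} (hi : 0 < i) (hid : i < d) : 0 < qInt d i := by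
  have h1 : 0 < sin (π / d) := by
    simpa using sin_natCast_mul_pi_div_pos one_pos (by omega : 1 < d)
  exact div_pos (sin_natCast_mul_pi_div_pos hi hid) h1

lemma log_qInt {d i : ℕ} (hi : 0 < i) (hid : i < d) :
    log (qInt d i) = logTwoSin (i * π / d) - logTwoSin (π / d) := by
  have h1 : 0 < sin (π / d) := by
    simpa using sin_natCast_mul_pi_div_pos one_pos (by omega : 1 < d)
  have hi' := sin_natCast_mul_pi_div_pos hi hid
  rw [qInt, ← mul_div_mul_left _ _ two_ne_zero, log_div (by positivity) (by positivity),
    logTwoSin, logTwoSin]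

lemma qFact_pos {d n : ℕ} (hn : n < d) : 0 < qFact d n :=
  Finset.prod_pos fun i hi => by
    rw [Finset.mem_Icc] at hi
    exact qInt_pos hi.1 (by omega)

lemma log_qFact {d n : ℕ} (hn : n < d) :
    log (qFact d n) = ∑ i ∈ Finset.Icc 1 n, logTwoSin (i * π / d) - n * logTwoSin (π / d) := by
  have hmem {i : ℕ} (hi : i ∈ Finset.Icc 1 n) : 0 < i ∧ i < d := by
    rw [Finset.mem_Icc] at hi
    omega
  rw [qFact, log_prod fun i hi => (qInt_pos (hmem hi).1 (hmem hi).2).ne',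
    Finset.sum_congr rfl fun i hi => log_qInt (hmem hi).1 (hmem hi).2, Finset.sum_sub_distrib,
    Finset.sum_const, Nat.card_Icc, nsmul_eq_mul, Nat.add_sub_cancel]

lemma qBinom_eq_exp {d k j : ℕ} (hk : k < d) (hj : j ≤ k) :
    qBinom d k j = exp (log (qFact d k) - log (qFact d j) - log (qFact d (k - j))) := by
  rw [exp_sub, exp_sub, exp_log (qFact_pos hk), exp_log (qFact_pos (by omega)),
    exp_log (qFact_pos (by omega)), qBinom, div_div]

lemma log_qFact_add_mem_Icc {d n : ℕ} (hn : 1 ≤ n) (hnd : 2 * n ≤ d) :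
    log (qFact d n) + n * logTwoSin (π / d) + d / π * Lob (π * n / d) ∈
      Set.Icc 0 (2 * log d) := by
  have hn' : (1 : ℝ) ≤ n := by exact_mod_cast hn
  have hnd' : 2 * (n : ℝ) ≤ d := by exact_mod_cast hnd
  have hd : (0 : ℝ) < d := by linarith
  set c := π / d with hc_def
  have hc : 0 < c := by positivity
  have hnc : n * c ≤ π / 2 := by
    rw [hc_def, mul_div_assoc', div_le_div_iff₀ (by linarith) two_pos]
    nlinarith [pi_pos]
  obtain ⟨hlower, hupper⟩ := integral_logTwoSin_le_mul_sum hc hn hnc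
  have hfirst := le_integral_logTwoSin hc (by nlinarith)
  have hlog_c : log (4 / π) + log c = 2 * log 2 - log d := by
    rw [hc_def, ← log_mul (by positivity) (by positivity), div_mul_div_cancel₀ pi_pos.ne',
      log_div four_ne_zero (by positivity), show (4 : ℝ) = 2 ^ 2 by norm_num, log_pow]
    push_cast
    ring
  have hlog_d : log 2 ≤ log d := log_le_log two_pos (by linarith)
  have hlog_two := log_two_gt_d9
  have hE : log (qFact d n) + n * logTwoSin (π / d) + d / π * Lob (π * n / d) =
      c⁻¹ * (c * ∑ i ∈ Finset.Icc 1 n, logTwoSin (i * c) - ∫ s in (0:ℝ)..n * c, logTwoSin s) := by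
    have hsum : ∑ i ∈ Finset.Icc 1 n, logTwoSin (i * π / d) =
        ∑ i ∈ Finset.Icc 1 n, logTwoSin (i * c) := by
      simp_rw [hc_def, mul_div_assoc]
    rw [log_qFact (by omega), hsum, Lob_eq_neg_integral_logTwoSin,
      show π * n / d = n * c by ring, show d / π = c⁻¹ by rw [inv_div]]
    rw [mul_sub, ← mul_assoc, inv_mul_cancel₀ hc.ne', one_mul]
    ring
  rw [hE]
  constructor
  · exact mul_nonneg (inv_nonneg.2 hc.le) (by linarith)
  · rw [inv_mul_le_iff₀ hc]
    nlinarith [logTwoSin_le_log_two (n * c)]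

/-- There is a constant `C > 0` such that for every `k ≥ 2` and `1 ≤ j ≤ k − 1`, with
`d = 2k+1`, the evaluated quantum binomial `[k choose j]_d` is bounded between
`exp(−(d/π)(Λ(πk/d) − Λ(πj/d) − Λ(π(k−j)/d)) ∓ 3C log d)`. -/
theorem stmt_1 :
    ∃ C : ℝ, 0 < C ∧
      ∀ k j : ℕ, 2 ≤ k → 1 ≤ j → j ≤ k - 1 →
        Real.exp (-((2 * k + 1 : ℝ) / Real.pi) *
              (Lob (Real.pi * k / (2 * k + 1)) - Lob (Real.pi * j / (2 * k + 1))
                - Lob (Real.pi * (k - j : ℕ) / (2 * k + 1)))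
            - 3 * C * Real.log (2 * k + 1))
          ≤ qBinom (2 * k + 1) k j ∧
        qBinom (2 * k + 1) k j
          ≤ Real.exp (-((2 * k + 1 : ℝ) / Real.pi) *
              (Lob (Real.pi * k / (2 * k + 1)) - Lob (Real.pi * j / (2 * k + 1))
                - Lob (Real.pi * (k - j : ℕ) / (2 * k + 1)))
            + 3 * C * Real.log (2 * k + 1)) := by
  refine ⟨2, two_pos, fun k j hk hj hjk => ?_⟩
  obtain ⟨hk_low, hk_upp⟩ := log_qFact_add_mem_Icc (d := 2 * k + 1) (n := k) (by omega) (by omega)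
  obtain ⟨hj_low, hj_upp⟩ := log_qFact_add_mem_Icc (d := 2 * k + 1) (n := j) hj (by omega)
  obtain ⟨hkj_low, hkj_upp⟩ :=
    log_qFact_add_mem_Icc (d := 2 * k + 1) (n := k - j) (by omega) (by omega)
  have hsplit : ((k - j : ℕ) : ℝ) * logTwoSin (π / (2 * k + 1 : ℕ)) =
      k * logTwoSin (π / (2 * k + 1 : ℕ)) - j * logTwoSin (π / (2 * k + 1 : ℕ)) := by
    rw [Nat.cast_sub (by omega)]
    ring
  rw [qBinom_eq_exp (by omega) (by omega), exp_le_exp, exp_le_exp]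
  push_cast at *
  constructor <;> linarith
end

section
/- Let L(α,β) = Λ(α) + Λ(π/2 − α + β) − Λ(π/2 + β). For every ε > 0 there exists δ > 0 such that L(α,β) < 2·Λ(π/4) + ε for all α ∈ [0, π/2] and all β with |β| < δ. -/
/-!
Since `∫₀^{π/2} log sin = -(π/2) log 2`, we have `Λ(π/2) = 0`, so `L(α, 0) = Λ(α) + Λ(π/2 - α)`.
Its derivative `log |2 cos α| - log |2 sin α|` is nonnegative on `[0, π/4]`, and the function is
symmetric under `α ↦ π/2 - α`, so `L(α, 0) ≤ 2Λ(π/4)` on `[0, π/2]`. As `Λ` is continuous, `L` is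
uniformly close to `L(·, 0)` on the compact `α`-interval once `β` is small.
-/

open Real Filter Set

/-- `L(α,β) = Λ(α) + Λ(π/2 − α + β) − Λ(π/2 + β)`. -/
noncomputable def Lfun (α β : ℝ) : ℝ :=
  Lob α + Lob (Real.pi / 2 - α + β) - Lob (Real.pi / 2 + β)

open MeasureTheory intervalIntegral Interval

lemma intervalIntegrable_log_abs_two_mul_sin (a b : ℝ) :
    IntervalIntegrable (fun s => log |2 * sin s|) volume a b :=
  (analyticOnNhd_const.mul analyticOnNhd_sin).meromorphicOn.intervalIntegrable_log_norm

@[fun_prop]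
lemma continuous_lob : Continuous Lob :=
  (continuous_primitive intervalIntegrable_log_abs_two_mul_sin 0).neg

lemma hasDerivAt_lob {x : ℝ} (hx : sin x ≠ 0) : HasDerivAt Lob (-log |2 * sin x|) x := by
  have hcont : ContinuousAt (fun s => log |2 * sin s|) x :=
    (continuous_sin.continuousAt.const_mul 2).abs.log (by simpa using hx)
  have hmeas : Measurable fun s => log |2 * sin s| := by measurability
  exact (integral_hasDerivAt_right (intervalIntegrable_log_abs_two_mul_sin 0 x)
    hmeas.stronglyMeasurable.stronglyMeasurableAtFilter hcont).neg

lemma lob_pi_div_two : Lob (π / 2) = 0 := by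
  have hpos : ∀ᵐ s ∂volume, s ∈ Ι 0 (π / 2) → log |2 * sin s| = log 2 + log (sin s) := by
    refine ae_of_all _ fun s hs => ?_
    rw [uIoc_of_le (by positivity)] at hs
    have : 0 < sin s := sin_pos_of_pos_of_lt_pi hs.1 (by linarith [hs.2, pi_pos])
    rw [abs_of_pos (by positivity), log_mul two_ne_zero this.ne']
  have hlog_sin : IntervalIntegrable (fun s => log (sin s)) volume 0 (π / 2) :=
    intervalIntegrable_log_sin
  rw [Lob, integral_congr_ae hpos, integral_add intervalIntegrable_const hlog_sin,
    intervalIntegral.integral_const, integral_log_sin_zero_pi_div_two]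
  simp only [sub_zero, smul_eq_mul]
  ring

lemma hasDerivAt_lob_add_lob_pi_div_two_sub {a : ℝ} (ha : sin a ≠ 0) (ha' : cos a ≠ 0) :
    HasDerivAt (fun a => Lob a + Lob (π / 2 - a)) (log |2 * cos a| - log |2 * sin a|) a := by
  have h := (hasDerivAt_lob (x := π / 2 - a) (by rwa [sin_pi_div_two_sub])).comp a
    ((hasDerivAt_id a).const_sub (π / 2))
  rw [sin_pi_div_two_sub] at h
  exact ((hasDerivAt_lob ha).add h).congr_deriv (by ring)

lemma monotoneOn_lob_add_lob_pi_div_two_sub :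
    MonotoneOn (fun a => Lob a + Lob (π / 2 - a)) (Icc 0 (π / 4)) := by
  refine monotoneOn_of_hasDerivWithinAt_nonneg (f' := fun a => log |2 * cos a| - log |2 * sin a|)
    (convex_Icc _ _) (by fun_prop) (fun a ha => ?_) (fun a ha => ?_)
  all_goals
    rw [interior_Icc] at ha
    have hsin : 0 < sin a := sin_pos_of_pos_of_lt_pi ha.1 (by linarith [ha.2, pi_pos])
    have hsin_le_cos : sin a ≤ cos a := by
      rw [← sin_pi_div_two_sub]
      exact sin_le_sin_of_le_of_le_pi_div_two (by linarith [ha.1, pi_pos]) (by linarith [ha.1])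
        (by linarith [ha.2])
  · exact (hasDerivAt_lob_add_lob_pi_div_two_sub hsin.ne' (by linarith)).hasDerivWithinAt
  · rw [sub_nonneg, abs_of_pos (by positivity), abs_of_pos (by linarith)]
    exact log_le_log (by positivity) (by linarith)

lemma lob_add_lob_pi_div_two_sub_le {α : ℝ} (hα : α ∈ Icc 0 (π / 2)) :
    Lob α + Lob (π / 2 - α) ≤ 2 * Lob (π / 4) := by
  have hquarter : 2 * Lob (π / 4) = Lob (π / 4) + Lob (π / 2 - π / 4) := by ring_nf
  rw [hquarter]
  rcases le_total α (π / 4) with h | h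
  · exact monotoneOn_lob_add_lob_pi_div_two_sub ⟨hα.1, h⟩ ⟨by positivity, le_rfl⟩ h
  · have := monotoneOn_lob_add_lob_pi_div_two_sub ⟨by linarith [hα.2], by linarith⟩
      ⟨by positivity, le_rfl⟩ (by linarith : π / 2 - α ≤ π / 4)
    simp only [sub_sub_cancel] at this
    linarith

lemma lfun_zero_le {α : ℝ} (hα : α ∈ Icc 0 (π / 2)) : Lfun α 0 ≤ 2 * Lob (π / 4) := by
  simpa [Lfun, lob_pi_div_two] using lob_add_lob_pi_div_two_sub_le hα

/-- For every `ε > 0` there is `δ > 0` such that `L(α,β) < 2Λ(π/4) + ε` for all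
`α ∈ [0, π/2]` and all `β` with `|β| < δ`. -/
theorem stmt_3 :
    ∀ ε : ℝ, 0 < ε → ∃ δ : ℝ, 0 < δ ∧
      ∀ α β : ℝ, α ∈ Set.Icc 0 (Real.pi / 2) → |β| < δ →
        Lfun α β < 2 * Lob (Real.pi / 4) + ε := by
  intro ε hε
  have hcont : Continuous (Function.uncurry fun β α => Lfun α β) := by
    unfold Lfun; fun_prop
  obtain ⟨v, hv, hvL⟩ := isCompact_Icc.mem_uniformity_of_prod hcont.continuousOn (mem_univ 0)
    (Metric.dist_mem_uniformity hε)
  rw [nhdsWithin_univ] at hv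
  obtain ⟨δ, hδ, hball⟩ := Metric.mem_nhds_iff.mp hv
  refine ⟨δ, hδ, fun α β hα hβ => ?_⟩
  have hclose := hvL β (hball (by rwa [Metric.mem_ball, Real.dist_eq, sub_zero])) α hα
  have := lfun_zero_le hα
  rw [mem_ofPred_eq, Real.dist_eq] at hclose
  linarith [le_abs_self (Lfun α β - Lfun α 0)]
end

section
/- For every a ∈ (0, 1), the limit as d → ∞ (over positive integers d) of (1/d)·∑_{i=1}^{⌊a·d⌋} log(2 sin(iπ/d)) equals −Λ(πa)/π. -/
open Real Filter Finset

/-!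
On `(0, π)` we have `log (2 sin s) = log (2 s) + log (sin s / s)`, where the first summand is
increasing and the second, by concavity of `sin` on `[0, π]`, decreasing. For a monotone `f` that
is integrable near the (possibly singular) endpoint `0`, the Riemann sum `h ∑_{k=1}^{n} f (k h)` is
squeezed between `∫₀^{nh} f` and `∫_h^{(n+1)h} f`, and both bounds tend to `∫₀^x f` as `h → 0⁺`
and `n h → x`. With `h = π / d` and `n = ⌊a d⌋`, the sum of the theorem is `1 / π` times such a
Riemann sum for each summand.
-/

open MeasureTheory Topology

section RiemannSum

variable {f : ℝ → ℝ}

theorem integral_le_sub_mul_of_monotoneOn {u v : ℝ} (huv : u ≤ v)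
    (hf : MonotoneOn f (Set.Ioc u v)) (hint : IntervalIntegrable f volume u v) :
    ∫ s in u..v, f s ≤ (v - u) * f v :=
  calc ∫ s in u..v, f s ≤ ∫ _ in u..v, f v :=
        intervalIntegral.integral_mono_on_of_le_Ioo huv hint intervalIntegrable_const
          fun _ hs => hf ⟨hs.1, hs.2.le⟩ ⟨hs.1.trans hs.2, le_rfl⟩ hs.2.le
    _ = (v - u) * f v := by simp

theorem sub_mul_le_integral_of_monotoneOn {u v : ℝ} (huv : u ≤ v)
    (hf : MonotoneOn f (Set.Icc u v)) :
    (v - u) * f u ≤ ∫ s in u..v, f s :=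
  calc (v - u) * f u = ∫ _ in u..v, f u := by simp
    _ ≤ ∫ s in u..v, f s :=
        intervalIntegral.integral_mono_on huv intervalIntegrable_const
          (MonotoneOn.intervalIntegrable (Set.uIcc_of_le huv ▸ hf))
          fun _ hs => hf ⟨le_rfl, huv⟩ hs hs.1

theorem integral_le_mul_sum_of_monotoneOn {h : ℝ} (hh : 0 ≤ h) (n : ℕ)
    (hf : MonotoneOn f (Set.Ioc 0 (n * h))) (hint : IntervalIntegrable f volume 0 (n * h)) :
    ∫ s in 0..n * h, f s ≤ h * ∑ k ∈ Icc 1 n, f (k * h) := by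
  induction n with
  | zero => simp
  | succ n ih =>
    have h0n : 0 ≤ (n : ℝ) * h := by positivity
    have hn : (n : ℝ) * h ≤ (n + 1 : ℕ) * h := by gcongr; simp
    have hsub : Set.uIcc 0 ((n : ℝ) * h) ⊆ Set.uIcc 0 ((n + 1 : ℕ) * h) :=
      Set.uIcc_subset_uIcc Set.left_mem_uIcc (Set.mem_uIcc_of_le h0n hn)
    have hsub' : Set.uIcc ((n : ℝ) * h) ((n + 1 : ℕ) * h) ⊆ Set.uIcc 0 ((n + 1 : ℕ) * h) :=
      Set.uIcc_subset_uIcc (Set.mem_uIcc_of_le h0n hn) Set.right_mem_uIcc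
    rw [← intervalIntegral.integral_add_adjacent_intervals (hint.mono_set hsub)
        (hint.mono_set hsub'), sum_Icc_succ_top (by omega), mul_add]
    gcongr
    · exact ih (hf.mono (Set.Ioc_subset_Ioc_right hn)) (hint.mono_set hsub)
    · calc ∫ s in n * h..(n + 1 : ℕ) * h, f s
            ≤ ((n + 1 : ℕ) * h - n * h) * f ((n + 1 : ℕ) * h) :=
            integral_le_sub_mul_of_monotoneOn hn (hf.mono (Set.Ioc_subset_Ioc_left h0n))
              (hint.mono_set hsub')
        _ = h * f ((n + 1 : ℕ) * h) := by push_cast; ring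

theorem mul_sum_le_integral_of_monotoneOn {h : ℝ} (hh : 0 ≤ h) (n : ℕ)
    (hf : MonotoneOn f (Set.Icc h ((n + 1 : ℕ) * h))) :
    h * ∑ k ∈ Icc 1 n, f (k * h) ≤ ∫ s in h..(n + 1 : ℕ) * h, f s := by
  induction n with
  | zero => simp
  | succ n ih =>
    have h0n : h ≤ (n + 1 : ℕ) * h := by push_cast; nlinarith
    have hn : ((n + 1 : ℕ) : ℝ) * h ≤ (n + 1 + 1 : ℕ) * h := by gcongr; simp
    have hsub : Set.Icc h ((n + 1 : ℕ) * h) ⊆ Set.Icc h ((n + 1 + 1 : ℕ) * h) :=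
      Set.Icc_subset_Icc_right hn
    have hsub' : Set.Icc ((n + 1 : ℕ) * h) ((n + 1 + 1 : ℕ) * h) ⊆
        Set.Icc h ((n + 1 + 1 : ℕ) * h) :=
      Set.Icc_subset_Icc_left h0n
    rw [← intervalIntegral.integral_add_adjacent_intervals
        (MonotoneOn.intervalIntegrable (Set.uIcc_of_le h0n ▸ hf.mono hsub))
        (MonotoneOn.intervalIntegrable (Set.uIcc_of_le hn ▸ hf.mono hsub')),
      sum_Icc_succ_top (by omega), mul_add]
    gcongr
    · exact ih (hf.mono hsub)
    · calc h * f ((n + 1 : ℕ) * h)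
            = ((n + 1 + 1 : ℕ) * h - (n + 1 : ℕ) * h) * f ((n + 1 : ℕ) * h) := by push_cast; ring
        _ ≤ _ := sub_mul_le_integral_of_monotoneOn hn (hf.mono hsub')

theorem tendsto_mul_sum_of_monotoneOn {ι : Type*} {l : Filter ι} {c x : ℝ} {h : ι → ℝ}
    {n : ι → ℕ} (hf : MonotoneOn f (Set.Ioc 0 c)) (hint : IntervalIntegrable f volume 0 c)
    (hx : x ∈ Set.Ico 0 c) (hh : Tendsto h l (𝓝[>] 0))
    (hn : Tendsto (fun i => n i * h i) l (𝓝 x)) :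
    Tendsto (fun i => h i * ∑ k ∈ Icc 1 (n i), f (k * h i)) l (𝓝 (∫ s in 0..x, f s)) := by
  have hc : 0 ≤ c := hx.1.trans hx.2.le
  have hint' : ∀ {u v : ℝ}, 0 ≤ u → u ≤ v → v ≤ c → IntervalIntegrable f volume u v :=
    fun hu huv hvc => hint.mono_set <| Set.uIcc_subset_uIcc
      (Set.mem_uIcc_of_le hu (huv.trans hvc)) (Set.mem_uIcc_of_le (hu.trans huv) hvc)
  have hprim : ∀ {y : ι → ℝ} {y₀ : ℝ}, y₀ ∈ Set.Icc 0 c → Tendsto y l (𝓝 y₀) →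
      (∀ᶠ i in l, y i ∈ Set.Icc 0 c) →
      Tendsto (fun i => ∫ s in 0..y i, f s) l (𝓝 (∫ s in 0..y₀, f s)) := by
    intro y y₀ hy₀ hy hyc
    have hFc := intervalIntegral.continuousOn_primitive_interval' hint Set.left_mem_uIcc
    rw [Set.uIcc_of_le hc] at hFc
    exact (hFc y₀ hy₀).tendsto.comp (tendsto_nhdsWithin_iff.2 ⟨hy, hyc⟩)
  obtain ⟨hh0, hpos⟩ := tendsto_nhdsWithin_iff.1 hh
  have hn1 : Tendsto (fun i => (n i + 1 : ℕ) * h i) l (𝓝 x) := by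
    simpa [add_mul] using hn.add hh0
  have hgrid : ∀ᶠ i in l, 0 < h i ∧ n i * h i ≤ (n i + 1 : ℕ) * h i ∧
      h i ≤ (n i + 1 : ℕ) * h i ∧ (n i + 1 : ℕ) * h i ≤ c := by
    filter_upwards [hpos, hn1.eventually_lt_const hx.2] with i (hi : 0 < h i) hic
    refine ⟨hi, ?_, ?_, hic.le⟩ <;> push_cast <;> nlinarith
  have hlower : Tendsto (fun i => ∫ s in 0..n i * h i, f s) l (𝓝 (∫ s in 0..x, f s)) := by
    refine hprim ⟨hx.1, hx.2.le⟩ hn ?_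
    filter_upwards [hgrid] with i ⟨hi, hle, _, hic⟩
    exact ⟨by positivity, hle.trans hic⟩
  have hupper : Tendsto (fun i => (∫ s in 0..(n i + 1 : ℕ) * h i, f s) - ∫ s in 0..h i, f s) l
      (𝓝 (∫ s in 0..x, f s)) := by
    have h1 := hprim ⟨hx.1, hx.2.le⟩ hn1 <| by
      filter_upwards [hgrid] with i ⟨hi, _, _, hic⟩
      exact ⟨by positivity, hic⟩
    have h2 := hprim ⟨le_rfl, hc⟩ hh0 <| by
      filter_upwards [hgrid] with i ⟨hi, _, hle, hic⟩
      exact ⟨hi.le, hle.trans hic⟩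
    simpa using h1.sub h2
  refine tendsto_of_tendsto_of_tendsto_of_le_of_le' hlower hupper ?_ ?_
  · filter_upwards [hgrid] with i ⟨hi, hle, _, hic⟩
    exact integral_le_mul_sum_of_monotoneOn hi.le (n i)
      (hf.mono (Set.Ioc_subset_Ioc_right (hle.trans hic)))
      (hint' le_rfl (by positivity) (hle.trans hic))
  · filter_upwards [hgrid] with i ⟨hi, _, hle, hic⟩
    rw [intervalIntegral.integral_interval_sub_left (hint' le_rfl (by positivity) hic)
      (hint' le_rfl hi.le (hle.trans hic))]
    exact mul_sum_le_integral_of_monotoneOn hi.le (n i)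
      (hf.mono fun s hs => ⟨hi.trans_le hs.1, hs.2.trans hic⟩)

theorem tendsto_mul_sum_of_antitoneOn {ι : Type*} {l : Filter ι} {c x : ℝ} {h : ι → ℝ}
    {n : ι → ℕ} (hf : AntitoneOn f (Set.Ioc 0 c)) (hint : IntervalIntegrable f volume 0 c)
    (hx : x ∈ Set.Ico 0 c) (hh : Tendsto h l (𝓝[>] 0))
    (hn : Tendsto (fun i => n i * h i) l (𝓝 x)) :
    Tendsto (fun i => h i * ∑ k ∈ Icc 1 (n i), f (k * h i)) l (𝓝 (∫ s in 0..x, f s)) := by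
  simpa using (tendsto_mul_sum_of_monotoneOn hf.neg hint.neg hx hh hn).neg

end RiemannSum

theorem tendsto_div_natCast_nhdsGT {C : ℝ} (hC : 0 < C) :
    Tendsto (fun d : ℕ => C / d) atTop (𝓝[>] 0) := by
  refine tendsto_nhdsWithin_iff.2 ⟨tendsto_const_div_atTop_nhds_zero_nat C, ?_⟩
  filter_upwards [eventually_gt_atTop 0] with d hd
  exact div_pos hC (Nat.cast_pos.2 hd)

theorem tendsto_floor_mul_mul_div {a : ℝ} (ha : 0 ≤ a) (C : ℝ) :
    Tendsto (fun d : ℕ => (⌊a * d⌋₊ : ℕ) * (C / d)) atTop (𝓝 (C * a)) := by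
  refine (((tendsto_nat_floor_mul_div_atTop ha).comp
    tendsto_natCast_atTop_atTop).const_mul C).congr fun d => ?_
  simp only [Function.comp_apply]
  ring

theorem monotoneOn_log_two_mul : MonotoneOn (fun s => log (2 * s)) (Set.Ioi 0) :=
  fun s (hs : 0 < s) _ _ hst => log_le_log (by positivity) (by linarith)

theorem intervalIntegrable_log_two_mul (u v : ℝ) :
    IntervalIntegrable (fun s => log (2 * s)) volume u v := by
  simpa using
    (intervalIntegral.intervalIntegrable_log' (a := 2 * u) (b := 2 * v)).comp_mul_left (c := 2)

-- At `0` the junk value `log (sin 0 / 0) = log 0 = 0` happens to be the limit value `log 1`.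
theorem antitoneOn_log_sin_div : AntitoneOn (fun s => log (sin s / s)) (Set.Ico 0 π) := by
  intro x ⟨hx0, hxπ⟩ y ⟨hy0, hyπ⟩ hxy
  rcases hx0.eq_or_lt with rfl | hx0
  · simpa using log_nonpos (div_nonneg (sin_nonneg_of_nonneg_of_le_pi hy0 hyπ.le) hy0)
      (div_le_one_of_le₀ (sin_le hy0) hy0)
  rcases hxy.eq_or_lt with rfl | hxy
  · rfl
  refine log_le_log (div_pos (sin_pos_of_pos_of_lt_pi (hx0.trans hxy) hyπ) (hx0.trans hxy)) ?_
  simpa using (strictConcaveOn_sin_Icc.secant_strict_mono (a := 0) ⟨le_rfl, pi_pos.le⟩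
    ⟨hx0.le, hxπ.le⟩ ⟨hy0, hyπ.le⟩ hx0.ne' (hx0.trans hxy).ne' hxy).le

theorem intervalIntegrable_log_sin_div {x : ℝ} (hx : x ∈ Set.Ico 0 π) :
    IntervalIntegrable (fun s => log (sin s / s)) volume 0 x :=
  AntitoneOn.intervalIntegrable <| antitoneOn_log_sin_div.mono <| by
    rw [Set.uIcc_of_le hx.1]
    exact Set.Icc_subset_Ico_right hx.2

theorem natCast_mul_div_lt_of_mem_Icc_floor {a C : ℝ} (ha : a < 1) (hC : 0 < C) {d i : ℕ}
    (hi : i ∈ Icc 1 ⌊a * d⌋₊) : (i : ℝ) * (C / d) < C := by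
  obtain ⟨hi1, hid⟩ := mem_Icc.1 hi
  have hi1 : (1 : ℝ) ≤ i := by exact_mod_cast hi1
  have hid : (i : ℝ) ≤ a * d := (Nat.le_floor_iff' (by omega)).1 hid
  have hd : (0 : ℝ) < d := by nlinarith [(Nat.cast_nonneg d : (0 : ℝ) ≤ d)]
  have hlt : (i : ℝ) < d := hid.trans_lt (mul_lt_of_lt_one_left hd ha)
  rw [← mul_div_assoc, div_lt_iff₀ hd, mul_comm C]
  exact mul_lt_mul_of_pos_right hlt hC

theorem log_two_mul_sin_eq {s : ℝ} (hs : s ∈ Set.Ico 0 π) :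
    log (2 * sin s) = log (2 * s) + log (sin s / s) := by
  rcases hs.1.eq_or_lt with rfl | hs0
  · simp
  rw [← log_mul (by positivity) (div_pos (sin_pos_of_pos_of_lt_pi hs0 hs.2) hs0).ne']
  field_simp

theorem lob_eq_neg_integral_add {x : ℝ} (hx : x ∈ Set.Ico 0 π) :
    Lob x = -((∫ s in 0..x, log (2 * s)) + ∫ s in 0..x, log (sin s / s)) := by
  rw [Lob, ← intervalIntegral.integral_add (intervalIntegrable_log_two_mul 0 x)
    (intervalIntegrable_log_sin_div hx)]
  refine congrArg Neg.neg (intervalIntegral.integral_congr fun s hs => ?_)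
  rw [Set.uIcc_of_le hx.1] at hs
  rw [log_abs, log_two_mul_sin_eq ⟨hs.1, hs.2.trans_lt hx.2⟩]

/-- For `a ∈ (0,1)`, as `d → ∞` over the positive integers,
`(1/d) ∑_{i=1}^{⌊ad⌋} log(2 sin(iπ/d)) → −Λ(πa)/π`. -/
theorem stmt_7 (a : ℝ) (ha0 : 0 < a) (ha1 : a < 1) :
    Filter.Tendsto
      (fun d : ℕ =>
        (1 / (d : ℝ)) *
          ∑ i ∈ Finset.Icc 1 ⌊a * (d : ℝ)⌋₊,
            Real.log (2 * Real.sin (i * Real.pi / d)))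
      Filter.atTop (nhds (-Lob (Real.pi * a) / Real.pi)) := by
  obtain ⟨c, hac, hcπ⟩ := exists_between (mul_lt_of_lt_one_right pi_pos ha1)
  have hx : π * a ∈ Set.Ico 0 c := ⟨by positivity, hac⟩
  have h₁ := tendsto_mul_sum_of_monotoneOn (monotoneOn_log_two_mul.mono Set.Ioc_subset_Ioi_self)
    (intervalIntegrable_log_two_mul 0 c) hx (tendsto_div_natCast_nhdsGT pi_pos)
    (tendsto_floor_mul_mul_div ha0.le π)
  have h₂ := tendsto_mul_sum_of_antitoneOn
    (antitoneOn_log_sin_div.mono fun s hs => ⟨hs.1.le, hs.2.trans_lt hcπ⟩)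
    (intervalIntegrable_log_sin_div ⟨hx.1.trans hac.le, hcπ⟩) hx
    (tendsto_div_natCast_nhdsGT pi_pos) (tendsto_floor_mul_mul_div ha0.le π)
  convert (h₁.add h₂).const_mul π⁻¹ using 2 with d
  · have hmem : ∀ i ∈ Icc 1 ⌊a * d⌋₊, (i : ℝ) * (π / d) ∈ Set.Ico 0 π := fun i hi =>
      ⟨by positivity, natCast_mul_div_lt_of_mem_Icc_floor ha1 pi_pos hi⟩
    rw [← mul_add, ← sum_add_distrib,
      sum_congr rfl fun i hi => (log_two_mul_sin_eq (hmem i hi)).symm, ← mul_assoc,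
      inv_mul_eq_div, div_div_cancel_left' pi_ne_zero]
    simp only [mul_div_assoc, one_div]
  · rw [lob_eq_neg_integral_add ⟨hx.1, hac.trans hcπ⟩]
    ring
end
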